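/- For d_K, d_L > 0 and all w_K, w_L ∈ ℝ, the inequality ∫_{-d_K}^{d_L} S(α)Q(α)² dα ≤ C_{K,L} · (1/3)·m̃·(d_K w_K² + d_L w_L²) holds, where Q(α) = w_K + ((α+d_K)/(d_K+d_L))(w_L - w_K), S is the cross-sectional area profile S(α) = m̃(d_K+α)/d_K on [-d_K,0] and m̃(d_L-α)/d_L on [0,d_L], and C_{K,L} = max{ (d_K² + 3d_K d_L + 2d_L²)/(2d_K² + 2d_K d_L), (2d_K² + 3d_K d_L + d_L²)/(2d_K d_L + 2d_L²) }. -/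

import Mathlib

set_option maxHeartbeats 1600000 in
theorem stmt_11 (dK dL : ℝ) (hK : 0 < dK) (hL : 0 < dL) (mt : ℝ) (hm : 0 < mt)
    (wK wL : ℝ) :
    (∫ α in (-dK)..dL,
        (if α ≤ 0 then mt * (dK + α) / dK else mt * (dL - α) / dL) *
          (wK + ((α + dK) / (dK + dL)) * (wL - wK))^2)
      ≤ max ((dK^2 + 3*dK*dL + 2*dL^2) / (2*dK^2 + 2*dK*dL))
            ((2*dK^2 + 3*dK*dL + dL^2) / (2*dK*dL + 2*dL^2)) *
          ((1/3) * mt * (dK * wK^2 + dL * wL^2)) := by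
  have hD : (0:ℝ) < dK + dL := by linarith
  have hDne : dK + dL ≠ 0 := ne_of_gt hD
  have hKne : dK ≠ 0 := ne_of_gt hK
  have hLne : dL ≠ 0 := ne_of_gt hL
  have hcont1 : Continuous (fun x : ℝ => mt * (dK + x) / dK *
      (wK + ((x + dK) / (dK + dL)) * (wL - wK))^2) := by fun_prop
  have hcont2 : Continuous (fun x : ℝ => mt * (dL - x) / dL *
      (wK + ((x + dK) / (dK + dL)) * (wL - wK))^2) := by fun_prop
  have hcontf : Continuous (fun x : ℝ =>
      (if x ≤ 0 then mt * (dK + x) / dK else mt * (dL - x) / dL) *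
      (wK + ((x + dK) / (dK + dL)) * (wL - wK))^2) := by
    apply Continuous.mul
    · apply Continuous.if_le (by fun_prop) (by fun_prop) continuous_id continuous_const
      intro x hx
      simp only [id_eq] at hx
      subst hx
      field_simp
      ring
    · fun_prop
  have hd1 : ∀ x : ℝ, HasDerivAt (fun x : ℝ => mt / (dK * (dK+dL)^2) *
      ((wK*(dK+dL))^2 * ((x+dK)^2 / 2) + 2*(wK*(dK+dL))*(wL-wK) * ((x+dK)^3 / 3)
        + (wL-wK)^2 * ((x+dK)^4 / 4)))
      (mt * (dK + x) / dK * (wK + ((x + dK) / (dK + dL)) * (wL - wK))^2) x := by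
    intro x
    have hu : HasDerivAt (fun y : ℝ => y + dK) 1 x := (hasDerivAt_id x).add_const dK
    have H := ((((hu.pow 2).div_const 2).const_mul ((wK*(dK+dL))^2)).add
        ((((hu.pow 3).div_const 3).const_mul (2*(wK*(dK+dL))*(wL-wK))).add
          (((hu.pow 4).div_const 4).const_mul ((wL-wK)^2)))).const_mul (mt / (dK * (dK+dL)^2))
    convert H using 1
    · rfl
    · rfl
    · funext y; simp only [Pi.add_apply, Pi.sub_apply, Pi.pow_apply]; ring
    · push_cast
      field_simp
      ring
  have hd2 : ∀ x : ℝ, HasDerivAt (fun x : ℝ => mt / (dL * (dK+dL)^2) *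
      (wK^2*(dK+dL)^3*(x+dK) + (2*wK*(wL-wK)*(dK+dL)^2 - wK^2*(dK+dL)^2) * ((x+dK)^2 / 2)
        + ((wL-wK)^2*(dK+dL) - 2*wK*(dK+dL)*(wL-wK)) * ((x+dK)^3 / 3)
        - (wL-wK)^2 * ((x+dK)^4 / 4)))
      (mt * (dL - x) / dL * (wK + ((x + dK) / (dK + dL)) * (wL - wK))^2) x := by
    intro x
    have hu : HasDerivAt (fun y : ℝ => y + dK) 1 x := (hasDerivAt_id x).add_const dK
    have H := (((hu.const_mul (wK^2*(dK+dL)^3)).add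
        ((((hu.pow 2).div_const 2).const_mul (2*wK*(wL-wK)*(dK+dL)^2 - wK^2*(dK+dL)^2)).add
          (((hu.pow 3).div_const 3).const_mul ((wL-wK)^2*(dK+dL) - 2*wK*(dK+dL)*(wL-wK))))).sub
        (((hu.pow 4).div_const 4).const_mul ((wL-wK)^2))).const_mul (mt / (dL * (dK+dL)^2))
    convert H using 1
    · rfl
    · rfl
    · funext y; simp only [Pi.add_apply, Pi.sub_apply, Pi.pow_apply]; ring
    · push_cast
      field_simp
      ring
  have hint1 : IntervalIntegrable (fun x : ℝ =>
      (if x ≤ 0 then mt * (dK + x) / dK else mt * (dL - x) / dL) *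
      (wK + ((x + dK) / (dK + dL)) * (wL - wK))^2) MeasureTheory.volume (-dK) 0 :=
    hcontf.intervalIntegrable _ _
  have hint2 : IntervalIntegrable (fun x : ℝ =>
      (if x ≤ 0 then mt * (dK + x) / dK else mt * (dL - x) / dL) *
      (wK + ((x + dK) / (dK + dL)) * (wL - wK))^2) MeasureTheory.volume 0 dL :=
    hcontf.intervalIntegrable _ _
  have hsplit := intervalIntegral.integral_add_adjacent_intervals hint1 hint2
  have he1 : (∫ α in (-dK)..(0:ℝ),
        (if α ≤ 0 then mt * (dK + α) / dK else mt * (dL - α) / dL) *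
          (wK + ((α + dK) / (dK + dL)) * (wL - wK))^2)
      = ∫ α in (-dK)..(0:ℝ), mt * (dK + α) / dK *
          (wK + ((α + dK) / (dK + dL)) * (wL - wK))^2 := by
    apply intervalIntegral.integral_congr
    intro x hx
    rw [Set.uIcc_of_le (by linarith : -dK ≤ (0:ℝ))] at hx
    simp only [if_pos hx.2]
  have he2 : (∫ α in (0:ℝ)..dL,
        (if α ≤ 0 then mt * (dK + α) / dK else mt * (dL - α) / dL) *
          (wK + ((α + dK) / (dK + dL)) * (wL - wK))^2)
      = ∫ α in (0:ℝ)..dL, mt * (dL - α) / dL *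
          (wK + ((α + dK) / (dK + dL)) * (wL - wK))^2 := by
    apply intervalIntegral.integral_congr
    intro x hx
    rw [Set.uIcc_of_le (le_of_lt hL)] at hx
    by_cases hx0 : x ≤ 0
    · have hx0' : x = 0 := le_antisymm hx0 hx.1
      subst hx0'
      simp only [if_pos le_rfl]
      field_simp
      ring
    · simp only [if_neg hx0]
  have hI1 := intervalIntegral.integral_eq_sub_of_hasDerivAt (f := fun x : ℝ => mt / (dK * (dK+dL)^2) *
      ((wK*(dK+dL))^2 * ((x+dK)^2 / 2) + 2*(wK*(dK+dL))*(wL-wK) * ((x+dK)^3 / 3)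
        + (wL-wK)^2 * ((x+dK)^4 / 4)))
      (a := -dK) (b := 0) (fun x _ => hd1 x) (hcont1.intervalIntegrable _ _)
  have hI2 := intervalIntegral.integral_eq_sub_of_hasDerivAt (f := fun x : ℝ => mt / (dL * (dK+dL)^2) *
      (wK^2*(dK+dL)^3*(x+dK) + (2*wK*(wL-wK)*(dK+dL)^2 - wK^2*(dK+dL)^2) * ((x+dK)^2 / 2)
        + ((wL-wK)^2*(dK+dL) - 2*wK*(dK+dL)*(wL-wK)) * ((x+dK)^3 / 3)
        - (wL-wK)^2 * ((x+dK)^4 / 4)))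
      (a := 0) (b := dL) (fun x _ => hd2 x) (hcont2.intervalIntegrable _ _)
  rw [← hsplit, he1, he2, hI1, hI2]
  -- now a purely algebraic inequality
  set A := (dK^2 + 3*dK*dL + 2*dL^2) / (2*dK^2 + 2*dK*dL) with hA
  set B := (2*dK^2 + 3*dK*dL + dL^2) / (2*dK*dL + 2*dL^2) with hB
  have hAM : A ≤ max A B := le_max_left _ _
  have hBM : B ≤ max A B := le_max_right _ _
  set V1 := mt / (dK * (dK+dL)^2) *
      ((wK*(dK+dL))^2 * (((0:ℝ)+dK)^2 / 2) + 2*(wK*(dK+dL))*(wL-wK) * (((0:ℝ)+dK)^3 / 3)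
        + (wL-wK)^2 * (((0:ℝ)+dK)^4 / 4))
    - mt / (dK * (dK+dL)^2) *
      ((wK*(dK+dL))^2 * ((-dK+dK)^2 / 2) + 2*(wK*(dK+dL))*(wL-wK) * ((-dK+dK)^3 / 3)
        + (wL-wK)^2 * ((-dK+dK)^4 / 4)) with hV1
  set V2 := mt / (dL * (dK+dL)^2) *
      (wK^2*(dK+dL)^3*(dL+dK) + (2*wK*(wL-wK)*(dK+dL)^2 - wK^2*(dK+dL)^2) * ((dL+dK)^2 / 2)
        + ((wL-wK)^2*(dK+dL) - 2*wK*(dK+dL)*(wL-wK)) * ((dL+dK)^3 / 3)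
        - (wL-wK)^2 * ((dL+dK)^4 / 4))
    - mt / (dL * (dK+dL)^2) *
      (wK^2*(dK+dL)^3*((0:ℝ)+dK) + (2*wK*(wL-wK)*(dK+dL)^2 - wK^2*(dK+dL)^2) * (((0:ℝ)+dK)^2 / 2)
        + ((wL-wK)^2*(dK+dL) - 2*wK*(dK+dL)*(wL-wK)) * (((0:ℝ)+dK)^3 / 3)
        - (wL-wK)^2 * (((0:ℝ)+dK)^4 / 4)) with hV2
  have hident : A * ((1/3)*mt*(dK*wK^2)) + B * ((1/3)*mt*(dL*wL^2)) - (V1 + V2)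
      = mt * (dK^2 + 3*dK*dL + dL^2) / (12*(dK+dL)) * (wK - wL)^2 := by
    rw [hV1, hV2, hA, hB]
    field_simp
    ring
  have hpos : 0 ≤ mt * (dK^2 + 3*dK*dL + dL^2) / (12*(dK+dL)) * (wK - wL)^2 := by
    apply mul_nonneg _ (sq_nonneg _)
    apply div_nonneg _ (by linarith)
    apply mul_nonneg hm.le
    nlinarith
  have hstep : V1 + V2 ≤ A * ((1/3)*mt*(dK*wK^2)) + B * ((1/3)*mt*(dL*wL^2)) := by linarith
  have hX : (0:ℝ) ≤ (1/3)*mt*(dK*wK^2) := by positivity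
  have hY : (0:ℝ) ≤ (1/3)*mt*(dL*wL^2) := by positivity
  calc V1 + V2
      ≤ A * ((1/3)*mt*(dK*wK^2)) + B * ((1/3)*mt*(dL*wL^2)) := hstep
    _ ≤ max A B * ((1/3)*mt*(dK*wK^2)) + max A B * ((1/3)*mt*(dL*wL^2)) :=
        add_le_add (mul_le_mul_of_nonneg_right hAM hX) (mul_le_mul_of_nonneg_right hBM hY)
    _ = max A B * ((1/3) * mt * (dK * wK^2 + dL * wL^2)) := by ring
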